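/- For every i ≥ 2, there exist positive integers β_1, …, β_i such that β_j divides N_j and β_j > 1 for each 1 ≤ j ≤ i, and the multiplicative order of a_i equals ∏_{j=1}^{i} β_j. -/

import Mathlib

/-- The `j`-th Fermat number `N_j = 2^(2^j) + 1`. -/
def fermatN (j : ℕ) : ℕ := 2 ^ 2 ^ j + 1

/-- `conwayL c n` is the subfield `L_{n-1}` of the algebraic closure of `F_2`
generated over `F_2` by `c 0, …, c (n-1)`; in particular `conwayL c 0 = ⊥ = F_2`. -/
noncomputable def conwayL (c : ℕ → AlgebraicClosure (ZMod 2)) (n : ℕ) :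
    IntermediateField (ZMod 2) (AlgebraicClosure (ZMod 2)) :=
  IntermediateField.adjoin (ZMod 2) (c '' Set.Iio n)

/-!
Write `q n = 2 ^ 2 ^ n`. Since `c n ∉ L_{n-1}` for every `n`, the field `L_{n-1}` has at least
`q n` elements; as its generators are fixed by `x ↦ x ^ q n`, it is then exactly the set of
fixed points of that map. The quadratic `c_{n+1}^2 + c_{n+1} = a_n` is stable under
`x ↦ x ^ q (n+1)`, so `c_{n+1} ^ q (n+1)` is one of its two roots `c_{n+1}`, `c_{n+1} + 1`, and
it cannot be the first since `c_{n+1} ∉ L_n`. Hence `a_{i+1} ^ N_{i+1} = a_i ^ 3` while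
`a_{i+1} ^ q (i+1) ≠ a_{i+1}`, so `O(a_{i+1}) = O(a_i ^ 3) * e` with
`e = gcd (O(a_{i+1}), N_{i+1}) > 1`. Finally `O(a_i ^ 3) = O(a_i)` for `i ≥ 1`, as `O(a_i)`
divides a product of Fermat numbers `N_j`, `j ≥ 1`, all coprime to `N_0 = 3`.
-/

open Polynomial IntermediateField

theorem orderOf_eq_orderOf_pow_mul_gcd {G : Type*} [Monoid G] (x : G) {n : ℕ} (hn : n ≠ 0) :
    orderOf x = orderOf (x ^ n) * (orderOf x).gcd n := by
  rw [orderOf_pow' x hn, Nat.div_mul_cancel (Nat.gcd_dvd_left _ _)]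

theorem pow_two_pow_two_pow_succ {M : Type*} [Monoid M] (x : M) (n : ℕ) :
    x ^ 2 ^ 2 ^ (n + 1) = (x ^ 2 ^ 2 ^ n) ^ 2 ^ 2 ^ n := by
  rw [← pow_mul, ← pow_add, ← two_mul, ← pow_succ']

theorem pow_sub_one_eq_one_iff_pow_eq_self {M₀ : Type*} [MonoidWithZero M₀]
    [IsCancelMulZero M₀] {x : M₀} (hx : x ≠ 0) {n : ℕ} (hn : n ≠ 0) :
    x ^ (n - 1) = 1 ↔ x ^ n = x := by
  rw [← pow_sub_one_mul hn, mul_eq_right₀ hx]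

theorem CharTwo.eq_or_eq_add_one_of_sq_add_self_eq {R : Type*} [CommRing R] [IsDomain R]
    [CharP R 2] {x y : R} (h : y ^ 2 + y = x ^ 2 + x) : y = x ∨ y = x + 1 := by
  have hfactor : (y + x) * (y + x + 1) = 0 := by
    linear_combination h + (x ^ 2 + x + x * y) * CharTwo.two_eq_zero (R := R)
  rcases mul_eq_zero.mp hfactor with h | h
  · exact Or.inl (CharTwo.add_eq_zero.mp h)
  · exact Or.inr (CharTwo.add_eq_zero.mp (by rw [← h]; ring))

theorem Finset.mem_of_pow_eq_self_of_le_card {K : Type*} [Field K] (S : Finset K) {q : ℕ}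
    (hq : 1 < q) (hcard : q ≤ S.card) (hS : ∀ y ∈ S, y ^ q = y) {x : K} (hx : x ^ q = x) :
    x ∈ S := by
  classical
  by_contra hxS
  have hroots : (insert x S).val ⊆ (X ^ q - X : K[X]).roots := fun y hy => by
    rw [mem_roots (FiniteField.X_pow_card_sub_X_ne_zero K hq)]
    rcases Finset.mem_insert.mp hy with rfl | hy
    · simp [hx]
    · simp [hS y hy]
  have := card_le_degree_of_subset_roots hroots
  rw [Finset.card_insert_of_notMem hxS, FiniteField.X_pow_card_sub_X_natDegree_eq K hq] at this
  omega

theorem IntermediateField.mem_of_pow_eq_self_of_le_card {F K : Type*} [Field F] [Field K]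
    [Algebra F K] (L : IntermediateField F K) [Finite L] {q : ℕ} (hq : 1 < q)
    (hcard : q ≤ Nat.card L) (hL : ∀ y ∈ L, y ^ q = y) {x : K} (hx : x ^ q = x) :
    x ∈ L := by
  have hfin : (L : Set K).Finite := Set.toFinite _
  refine hfin.mem_toFinset.mp <| hfin.toFinset.mem_of_pow_eq_self_of_le_card hq ?_
    (fun y hy => hL y (hfin.mem_toFinset.mp hy)) hx
  rwa [← Set.ncard_eq_toFinset_card _ hfin, ← Nat.card_coe_set_eq]

theorem IntermediateField.pow_eq_self_of_mem_adjoin {p : ℕ} [Fact p.Prime] {K : Type*} [Field K]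
    [Algebra (ZMod p) K] [CharP K p] {S : Set K} {m : ℕ} (hS : ∀ s ∈ S, s ^ p ^ m = s) {x : K}
    (hx : x ∈ adjoin (ZMod p) S) : x ^ p ^ m = x := by
  induction hx using adjoin_induction with
  | mem s hs => exact hS s hs
  | algebraMap r => rw [← map_pow, ZMod.pow_card_pow]
  | add x y _ _ ihx ihy => rw [add_pow_char_pow, ihx, ihy]
  | inv x _ ihx => rw [inv_pow, ihx]
  | mul x y _ _ ihx ihy => rw [mul_pow, ihx, ihy]

theorem IntermediateField.card_sq_le_card_adjoin_simple {F K : Type*} [Field F] [Field K]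
    [Algebra F K] (E : IntermediateField F K) [Finite E] {α : K} (hα : IsIntegral F α)
    (hαE : α ∉ E) : Nat.card E ^ 2 ≤ Nat.card (adjoin E {α}) := by
  have hαint : IsIntegral E α := hα.tower_top
  have : FiniteDimensional E (adjoin E {α}) := adjoin.finiteDimensional hαint
  have hdeg : 2 ≤ Module.finrank E (adjoin E {α}) := by
    rw [adjoin.finrank hαint]
    have h1 : (minpoly E α).natDegree ≠ 1 := fun h => hαE <| by
      obtain ⟨r, rfl⟩ := minpoly.natDegree_eq_one_iff.mp h
      exact r.2
    have h0 := minpoly.natDegree_pos hαint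
    omega
  rw [Module.natCard_eq_pow_finrank (K := E) (V := adjoin E {α})]
  exact Nat.pow_le_pow_right Nat.card_pos hdeg

structure IsConwayTower (c : ℕ → AlgebraicClosure (ZMod 2)) : Prop where
  zero : c 0 ^ 2 + c 0 + 1 = 0
  succ : ∀ i : ℕ, c (i + 1) ^ 2 + c (i + 1) + ∏ j ∈ Finset.range (i + 1), c j = 0
  not_mem : ∀ i : ℕ, c (i + 1) ∉ conwayL c (i + 1)

noncomputable def conwayA (c : ℕ → AlgebraicClosure (ZMod 2)) (i : ℕ) :
    AlgebraicClosure (ZMod 2) :=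
  ∏ j ∈ Finset.range (i + 1), c j

section Conway

variable {c : ℕ → AlgebraicClosure (ZMod 2)}

theorem conwayL_zero : conwayL c 0 = ⊥ := by
  simp [conwayL]

theorem conwayL_succ (n : ℕ) :
    conwayL c (n + 1) = (adjoin (conwayL c n) {c n}).restrictScalars (ZMod 2) := by
  rw [conwayL, conwayL, adjoin_adjoin_left, Set.Iio_add_one_eq_Iic, ← Set.Iio_insert,
    Set.image_insert_eq, Set.insert_eq, Set.union_comm]

theorem c_mem_conwayL {k n : ℕ} (h : k < n) : c k ∈ conwayL c n :=
  subset_adjoin _ _ ⟨k, h, rfl⟩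

instance (n : ℕ) : FiniteDimensional (ZMod 2) (conwayL c n) :=
  have : Finite (c '' Set.Iio n) := (Set.finite_Iio n).image c
  finiteDimensional_adjoin fun x _ => Algebra.IsIntegral.isIntegral x

instance (n : ℕ) : Finite (conwayL c n) :=
  Module.finite_of_finite (ZMod 2)

theorem conwayA_succ (i : ℕ) :
    conwayA c (i + 1) = conwayA c i * c (i + 1) :=
  Finset.prod_range_succ c (i + 1)

theorem conwayA_mem_conwayL {i n : ℕ} (h : i < n) : conwayA c i ∈ conwayL c n :=
  prod_mem fun _ hj => c_mem_conwayL ((Finset.mem_range.mp hj).trans_le h)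

theorem pow_eq_self_of_mem_conwayL {n : ℕ} (hfix : ∀ k < n, c k ^ 2 ^ 2 ^ n = c k)
    {x : AlgebraicClosure (ZMod 2)} (hx : x ∈ conwayL c n) : x ^ 2 ^ 2 ^ n = x :=
  pow_eq_self_of_mem_adjoin (by rintro _ ⟨k, hk, rfl⟩; exact hfix k hk) hx

namespace IsConwayTower

variable (hc : IsConwayTower c)
include hc

theorem c_zero_pow_three : c 0 ^ 3 = 1 := by
  linear_combination (c 0 - 1) * hc.zero

theorem c_not_mem_conwayL (n : ℕ) : c n ∉ conwayL c n := by
  cases n with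
  | succ n => exact hc.not_mem n
  | zero =>
    rw [conwayL_zero, mem_bot]
    rintro ⟨r, hr⟩
    have h := hc.zero
    rw [← hr, ← map_pow, ← map_add, ← map_one (algebraMap (ZMod 2) _), ← map_add,
      map_eq_zero_iff _ (algebraMap (ZMod 2) _).injective] at h
    clear hr
    revert r
    decide

theorem c_ne_zero (n : ℕ) : c n ≠ 0 := fun h =>
  hc.c_not_mem_conwayL n (h ▸ zero_mem _)

theorem conwayA_ne_zero (i : ℕ) : conwayA c i ≠ 0 :=
  Finset.prod_ne_zero_iff.mpr fun j _ => hc.c_ne_zero j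

theorem le_card_conwayL (n : ℕ) : 2 ^ 2 ^ n ≤ Nat.card (conwayL c n) := by
  induction n with
  | zero => simp [conwayL_zero, Nat.card_congr (botEquiv (ZMod 2) _).toEquiv]
  | succ n ih =>
    calc 2 ^ 2 ^ (n + 1) = (2 ^ 2 ^ n) ^ 2 := by rw [← pow_mul, pow_succ]
      _ ≤ Nat.card (conwayL c n) ^ 2 := Nat.pow_le_pow_left ih 2
      _ ≤ Nat.card (adjoin (conwayL c n) {c n}) :=
        card_sq_le_card_adjoin_simple _ (Algebra.IsIntegral.isIntegral (R := ZMod 2) (c n))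
          (hc.c_not_mem_conwayL n)
      _ = Nat.card (conwayL c (n + 1)) := by rw [conwayL_succ]; rfl

theorem mem_conwayL_of_pow_eq_self {n : ℕ} (hfix : ∀ k < n, c k ^ 2 ^ 2 ^ n = c k)
    {x : AlgebraicClosure (ZMod 2)} (hx : x ^ 2 ^ 2 ^ n = x) : x ∈ conwayL c n :=
  mem_of_pow_eq_self_of_le_card _ (Nat.one_lt_two_pow (by positivity)) (hc.le_card_conwayL n)
    (fun _ => pow_eq_self_of_mem_conwayL hfix) hx

theorem c_succ_pow_of_pow_eq_self {n : ℕ} (hfix : ∀ k < n + 1, c k ^ 2 ^ 2 ^ (n + 1) = c k) :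
    c (n + 1) ^ 2 ^ 2 ^ (n + 1) = c (n + 1) + 1 := by
  have ha : conwayA c n ^ 2 ^ 2 ^ (n + 1) = conwayA c n :=
    pow_eq_self_of_mem_conwayL hfix (conwayA_mem_conwayL (Nat.lt_succ_self n))
  have hquad : c (n + 1) ^ 2 + c (n + 1) = conwayA c n := CharTwo.add_eq_zero.mp (hc.succ n)
  refine (CharTwo.eq_or_eq_add_one_of_sq_add_self_eq ?_).resolve_left fun h =>
    hc.not_mem n (hc.mem_conwayL_of_pow_eq_self hfix h)
  rw [← pow_right_comm, ← add_pow_char_pow, hquad, ha]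

theorem c_pow_eq_self (n : ℕ) : ∀ k < n, c k ^ 2 ^ 2 ^ n = c k := by
  induction n with
  | zero => intro k hk; omega
  | succ n ih =>
    intro k hk
    rw [pow_two_pow_two_pow_succ]
    rcases (Nat.lt_succ_iff_lt_or_eq.mp hk) with hk | rfl
    · rw [ih k hk, ih k hk]
    · cases k with
      | zero =>
        rw [show (c 0 ^ 2 ^ 2 ^ 0) ^ 2 ^ 2 ^ 0 = c 0 ^ 3 * c 0 by ring, hc.c_zero_pow_three,
          one_mul]
      | succ m =>
        rw [hc.c_succ_pow_of_pow_eq_self ih, add_pow_char_pow, hc.c_succ_pow_of_pow_eq_self ih,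
          one_pow, add_assoc, CharTwo.add_self_eq_zero, add_zero]

theorem c_succ_pow (n : ℕ) : c (n + 1) ^ 2 ^ 2 ^ (n + 1) = c (n + 1) + 1 :=
  hc.c_succ_pow_of_pow_eq_self (hc.c_pow_eq_self (n + 1))

theorem conwayA_pow_eq_self (i : ℕ) : conwayA c i ^ 2 ^ 2 ^ (i + 1) = conwayA c i :=
  pow_eq_self_of_mem_conwayL (hc.c_pow_eq_self (i + 1)) (conwayA_mem_conwayL (Nat.lt_succ_self i))

theorem conwayA_succ_pow_ne_self (i : ℕ) :
    conwayA c (i + 1) ^ 2 ^ 2 ^ (i + 1) ≠ conwayA c (i + 1) := by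
  rw [conwayA_succ, mul_pow, hc.conwayA_pow_eq_self, hc.c_succ_pow, Ne,
    mul_right_inj' (hc.conwayA_ne_zero i)]
  simp

theorem conwayA_succ_pow_fermatN (i : ℕ) :
    conwayA c (i + 1) ^ fermatN (i + 1) = conwayA c i ^ 3 := by
  have hquad : c (i + 1) ^ 2 + c (i + 1) = conwayA c i := CharTwo.add_eq_zero.mp (hc.succ i)
  rw [fermatN, pow_succ, conwayA_succ, mul_pow, hc.conwayA_pow_eq_self, hc.c_succ_pow]
  linear_combination conwayA c i ^ 2 * hquad

theorem orderOf_conwayA_dvd (i : ℕ) : orderOf (conwayA c i) ∣ 2 ^ 2 ^ (i + 1) - 1 :=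
  orderOf_dvd_of_pow_eq_one <|
    (pow_sub_one_eq_one_iff_pow_eq_self (hc.conwayA_ne_zero i) (by positivity)).mpr
      (hc.conwayA_pow_eq_self i)

theorem exists_orderOf_conwayA_succ (i : ℕ) :
    ∃ e, e ∣ fermatN (i + 1) ∧ 1 < e ∧
      orderOf (conwayA c (i + 1)) = orderOf (conwayA c i ^ 3) * e := by
  have hN : fermatN (i + 1) ≠ 0 := by simp [fermatN]
  have hord := orderOf_eq_orderOf_pow_mul_gcd (conwayA c (i + 1)) hN
  rw [hc.conwayA_succ_pow_fermatN] at hord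
  refine ⟨_, Nat.gcd_dvd_right _ _, ?_, hord⟩
  by_contra! hle
  have hgcd : (orderOf (conwayA c (i + 1))).gcd (fermatN (i + 1)) = 1 :=
    le_antisymm hle (Nat.gcd_pos_of_pos_right _ (Nat.pos_of_ne_zero hN))
  have hdvd : orderOf (conwayA c (i + 1)) ∣ 2 ^ 2 ^ (i + 1) - 1 := by
    rw [hord, hgcd, mul_one]
    exact (orderOf_pow_dvd 3).trans (hc.orderOf_conwayA_dvd i)
  exact hc.conwayA_succ_pow_ne_self i <|
    (pow_sub_one_eq_one_iff_pow_eq_self (hc.conwayA_ne_zero _) (by positivity)).mp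
      (orderOf_dvd_iff_pow_eq_one.mp hdvd)

theorem exists_orderOf_conwayA_eq_prod {i : ℕ} (hi : 1 ≤ i) :
    ∃ β : ℕ → ℕ, (∀ j : ℕ, 1 ≤ j → j ≤ i → β j ∣ fermatN j ∧ 1 < β j) ∧
      orderOf (conwayA c i) = ∏ j ∈ Finset.Icc 1 i, β j := by
  choose e he_dvd he_gt he_ord using hc.exists_orderOf_conwayA_succ
  refine ⟨fun j => e (j - 1), fun j hj _ => ?_, ?_⟩
  · obtain ⟨k, rfl⟩ := Nat.exists_eq_add_of_le' hj
    exact ⟨he_dvd k, he_gt k⟩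
  induction i, hi using Nat.le_induction with
  | base =>
    rw [he_ord 0, conwayA, Finset.prod_range_one, hc.c_zero_pow_three, orderOf_one, one_mul,
      Finset.Icc_self, Finset.prod_singleton]
  | succ i _ ih =>
    have hcop : (orderOf (conwayA c i)).Coprime 3 := by
      rw [ih]
      refine Nat.Coprime.prod_left fun j hj => ?_
      obtain ⟨k, rfl⟩ := Nat.exists_eq_add_of_le' (Finset.mem_Icc.mp hj).1
      -- `3` is the Fermat number `N_0`
      exact Nat.Coprime.coprime_dvd_left (he_dvd k)
        (Nat.coprime_fermatNumber_fermatNumber (Nat.succ_ne_zero k))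
    rw [he_ord i, hcop.orderOf_pow, ih, Finset.prod_Icc_succ_top (by omega)]
    rfl

end IsConwayTower

end Conway

/-- For every `i ≥ 2`, there exist positive integers `β_1, …, β_i` with
`β_j ∣ N_j` and `β_j > 1` for `1 ≤ j ≤ i`, such that the multiplicative order
of `a_i = ∏_{j=0}^{i} c_j` equals `∏_{j=1}^{i} β_j`. -/
theorem conway_orderOf_a (c : ℕ → AlgebraicClosure (ZMod 2))
    (hc0 : c 0 ^ 2 + c 0 + 1 = 0)
    (hrec : ∀ i : ℕ, c (i + 1) ^ 2 + c (i + 1) + ∏ j ∈ Finset.range (i + 1), c j = 0)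
    (hnot : ∀ i : ℕ, c (i + 1) ∉ conwayL c (i + 1))
    (i : ℕ) (hi : 2 ≤ i) :
    ∃ β : ℕ → ℕ, (∀ j : ℕ, 1 ≤ j → j ≤ i → β j ∣ fermatN j ∧ 1 < β j) ∧
      orderOf (∏ j ∈ Finset.range (i + 1), c j) = ∏ j ∈ Finset.Icc 1 i, β j :=
  (IsConwayTower.mk hc0 hrec hnot).exists_orderOf_conwayA_eq_prod (by omega)
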